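/- arXiv:1809.02470 — 2 statements merged into one kernel-verified Lean document; each statement's English description precedes it below -/
import Mathlib

section
/- Let ∑ a¹_n, ∑ a²_n, ∑ a³_n be conditionally convergent series of real numbers. Then there is a partition P of ℕ into at most 8 sets such that for each i ∈ {1,2,3}: (1) there is some A ∈ P such that the subseries of a^i over A tends to +∞; (2) there is some A ∈ P such that the subseries of a^i over A tends to -∞; and (3) for every A ∈ P, the terms a^i_n for n ∈ A all have the same sign (either a^i_n > 0 for all n ∈ A, or a^i_n ≤ 0 for all n ∈ A). -/
open Filter

/-- The partial sums of the subseries of `a` over `A`: `S N = ∑_{n < N, n ∈ A} a n`. -/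
noncomputable def partialSum (a : ℕ → ℝ) (A : Set ℕ) (N : ℕ) : ℝ :=
  ∑ n ∈ Finset.range N, Set.indicator A a n

/-- `A` sends the series `∑ a n` to infinity: the subseries over `A` tends to `+∞` or `-∞`. -/
def SendsToInfinity (a : ℕ → ℝ) (A : Set ℕ) : Prop :=
  Tendsto (partialSum a A) atTop atTop ∨ Tendsto (partialSum a A) atTop atBot

/-- `∑ a n` is conditionally convergent: partial sums converge, but `∑ |a n| = ∞`. -/
def CondConv (a : ℕ → ℝ) : Prop :=
  (∃ L : ℝ, Tendsto (fun N => ∑ n ∈ Finset.range N, a n) atTop (nhds L)) ∧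
    ¬ Summable (fun n => |a n|)

/-- The subseries of `a` over `A` is absolutely convergent: `∑_{n ∈ A} |a n| < ∞`. -/
def AbsConvOn (a : ℕ → ℝ) (A : Set ℕ) : Prop :=
  Summable (Set.indicator A fun n => |a n|)

/-- `A` is tame w.r.t. `∑ a n` if at least one of the positive/nonpositive parts of the
subseries over `A` is absolutely convergent. -/
def Tame (a : ℕ → ℝ) (A : Set ℕ) : Prop :=
  AbsConvOn a {n ∈ A | 0 < a n} ∨ AbsConvOn a {n ∈ A | a n ≤ 0}

/-!
Split `ℕ` according to the sign pattern `n ↦ {i | 0 < aᵢ n}`; there are `2³ = 8` patterns,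
and on each cell every series has constant sign. A conditionally convergent series has a
non-summable positive part and a non-summable nonpositive part. A non-summable part cannot be
split into finitely many summable pieces, so some cell carries a non-summable piece of it, and on
that cell the subseries is monotone and tends to `+∞` (resp. `-∞`).
-/

open Set

lemma Set.ncard_range_le_card {β γ : Type*} [Finite β] (f : β → γ) :
    (range f).ncard ≤ Nat.card β := by
  rw [← image_univ]
  exact (ncard_image_le finite_univ).trans (ncard_univ β).le

section Fibers

variable {α β M : Type*} [AddCommMonoid M] [TopologicalSpace M] [ContinuousAdd M] [Finite β]

lemma summable_of_summable_indicator_fiber (σ : α → β) {f : α → M}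
    (h : ∀ b, Summable ((σ ⁻¹' {b}).indicator f)) : Summable f := by
  cases nonempty_fintype β
  convert summable_sum (s := Finset.univ) fun b _ => h b with x
  rw [Finset.sum_eq_single (σ x) (fun b _ hb => indicator_of_notMem (s := σ ⁻¹' {b}) hb.symm f)
    (by simp)]
  exact (indicator_of_mem (s := σ ⁻¹' {σ x}) rfl f).symm

lemma exists_not_summable_indicator_fiber (σ : α → β) {B : Set β} {f : α → M}
    (hf : ¬ Summable ((σ ⁻¹' B).indicator f)) :
    ∃ b ∈ B, ¬ Summable ((σ ⁻¹' {b}).indicator f) := by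
  by_contra! h
  refine hf (summable_of_summable_indicator_fiber σ fun b => ?_)
  rw [indicator_indicator]
  by_cases hb : b ∈ B
  · rw [inter_eq_left.2 (preimage_mono (singleton_subset_iff.2 hb))]
    exact h b hb
  · rw [← preimage_inter, singleton_inter_eq_empty.2 hb, preimage_empty, indicator_empty]
    exact summable_zero

end Fibers

section Subseries

variable {a : ℕ → ℝ} {A B : Set ℕ}

lemma absConvOn_neg_iff : AbsConvOn (-a) A ↔ AbsConvOn a A := by
  simp [AbsConvOn]

lemma AbsConvOn.mono (h : AbsConvOn a B) (hAB : A ⊆ B) : AbsConvOn a A :=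
  h.of_nonneg_of_le (indicator_nonneg fun n _ => abs_nonneg (a n))
    (indicator_le_indicator_of_subset hAB fun n => abs_nonneg (a n))

lemma partialSum_neg (a : ℕ → ℝ) (A : Set ℕ) : partialSum (-a) A = -partialSum a A := by
  funext N
  simp only [partialSum, indicator_neg', Pi.neg_apply, Finset.sum_neg_distrib]

lemma tendsto_partialSum_atTop (hA : ∀ n ∈ A, 0 ≤ a n) (h : ¬ AbsConvOn a A) :
    Tendsto (partialSum a A) atTop atTop := by
  have hind : A.indicator a = A.indicator fun n => |a n| :=
    indicator_congr fun n hn => (abs_of_nonneg (hA n hn)).symm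
  unfold partialSum
  rw [hind]
  exact (not_summable_iff_tendsto_nat_atTop_of_nonneg
    (indicator_nonneg fun n _ => abs_nonneg (a n))).1 h

lemma tendsto_partialSum_atBot (hA : ∀ n ∈ A, a n ≤ 0) (h : ¬ AbsConvOn a A) :
    Tendsto (partialSum a A) atTop atBot := by
  have := tendsto_partialSum_atTop (a := -a) (fun n hn => neg_nonneg.2 (hA n hn))
    (absConvOn_neg_iff.not.2 h)
  rw [partialSum_neg] at this
  exact tendsto_neg_atTop_iff.1 this

lemma CondConv.neg (h : CondConv a) : CondConv (-a) := by
  obtain ⟨⟨L, hL⟩, hnot⟩ := h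
  exact ⟨⟨-L, by simpa only [Pi.neg_apply, Finset.sum_neg_distrib] using hL.neg⟩,
    by simpa only [Pi.neg_apply, abs_neg] using hnot⟩

lemma CondConv.not_absConvOn_pos (h : CondConv a) : ¬ AbsConvOn a {n | 0 < a n} := by
  obtain ⟨⟨L, hL⟩, hnot⟩ := h
  intro hpos
  set p := {n | 0 < a n}.indicator fun n => |a n|
  have hdecomp : ∀ n, |a n| = 2 * p n - a n := by
    intro n
    by_cases hn : 0 < a n
    · rw [show p n = |a n| from indicator_of_mem hn _, abs_of_pos hn]; ring
    · rw [show p n = 0 from indicator_of_notMem hn _, abs_of_nonpos (not_lt.1 hn)]; ring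
  have hsums : (fun N => ∑ n ∈ Finset.range N, |a n|) =
      fun N => 2 * ∑ n ∈ Finset.range N, p n - ∑ n ∈ Finset.range N, a n := by
    funext N
    rw [Finset.mul_sum, ← Finset.sum_sub_distrib]
    exact Finset.sum_congr rfl fun n _ => hdecomp n
  have hlim :
      Tendsto (fun N => ∑ n ∈ Finset.range N, |a n|) atTop (nhds (2 * ∑' n, p n - L)) := by
    rw [hsums]
    exact (hpos.hasSum.tendsto_sum_nat.const_mul 2).sub hL
  exact hnot ((hasSum_iff_tendsto_nat_of_nonneg (fun n => abs_nonneg (a n)) _).2 hlim).summable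

lemma CondConv.not_absConvOn_nonpos (h : CondConv a) : ¬ AbsConvOn a {n | a n ≤ 0} :=
  fun hnonpos => h.neg.not_absConvOn_pos <| absConvOn_neg_iff.2 <|
    hnonpos.mono fun n (hn : 0 < -a n) => (neg_pos.1 hn).le

end Subseries

section SignPattern

def posIndices {ι : Type*} (a : ι → ℕ → ℝ) (n : ℕ) : Set ι := {i | 0 < a i n}

variable {ι : Type*} {a : ι → ℕ → ℝ} {s : Set ι} {n : ℕ} {i : ι}

lemma pos_of_mem_fiber_posIndices (hn : n ∈ posIndices a ⁻¹' {s}) (hi : i ∈ s) : 0 < a i n :=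
  show i ∈ posIndices a n from (mem_singleton_iff.1 hn).symm ▸ hi

lemma nonpos_of_mem_fiber_posIndices (hn : n ∈ posIndices a ⁻¹' {s}) (hi : i ∉ s) :
    a i n ≤ 0 :=
  not_lt.1 fun hpos => hi (mem_singleton_iff.1 hn ▸ hpos)

end SignPattern

/-- Lemma 1 (partition lemma): given three conditionally convergent series, there is a
partition of `ℕ` into at most 8 sets such that for each series, some piece sends it to `+∞`,
some piece sends it to `-∞`, and on every piece the terms of the series all have the same sign. -/
theorem partition_lemma (a : Fin 3 → ℕ → ℝ) (hcc : ∀ i, CondConv (a i)) :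
    ∃ P : Set (Set ℕ), P.Finite ∧ P.ncard ≤ 8 ∧
      (∀ A ∈ P, ∀ B ∈ P, A ≠ B → Disjoint A B) ∧
      ⋃₀ P = Set.univ ∧
      ∀ i : Fin 3,
        (∃ A ∈ P, Tendsto (partialSum (a i) A) atTop atTop) ∧
        (∃ A ∈ P, Tendsto (partialSum (a i) A) atTop atBot) ∧
        (∀ A ∈ P, (∀ n ∈ A, 0 < a i n) ∨ (∀ n ∈ A, a i n ≤ 0)) := by
  set σ := posIndices a
  refine ⟨range fun s => σ ⁻¹' {s}, finite_range _, ?_, ?_, ?_, fun i => ⟨?_, ?_, ?_⟩⟩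
  · calc _ ≤ Nat.card (Set (Fin 3)) := ncard_range_le_card _
      _ = 8 := by simp [Nat.card_eq_fintype_card, Fintype.card_set]
  · rintro _ ⟨s, rfl⟩ _ ⟨t, rfl⟩ hst
    exact Disjoint.preimage σ (disjoint_singleton.2 fun h => hst (h ▸ rfl))
  · rw [sUnion_range, ← preimage_iUnion, iUnion_of_singleton, preimage_univ]
  · obtain ⟨s, hi, hs⟩ := exists_not_summable_indicator_fiber σ (B := {s | i ∈ s})
      (hcc i).not_absConvOn_pos
    exact ⟨_, ⟨s, rfl⟩, tendsto_partialSum_atTop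
      (fun n hn => (pos_of_mem_fiber_posIndices hn hi).le) hs⟩
  · have hnonpos : ¬ AbsConvOn (a i) (σ ⁻¹' {s | i ∉ s}) := by
      simpa [σ, posIndices] using (hcc i).not_absConvOn_nonpos
    obtain ⟨s, hi, hs⟩ := exists_not_summable_indicator_fiber σ hnonpos
    exact ⟨_, ⟨s, rfl⟩, tendsto_partialSum_atBot
      (fun n hn => nonpos_of_mem_fiber_posIndices hn hi) hs⟩
  · rintro _ ⟨s, rfl⟩
    by_cases hi : i ∈ s
    · exact .inl fun n hn => pos_of_mem_fiber_posIndices hn hi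
    · exact .inr fun n hn => nonpos_of_mem_fiber_posIndices hn hi
end

section
/- Let ∑ a_n be a conditionally convergent series of real numbers and let A ⊆ ℕ be tame with respect to ∑ a_n. If the subseries of a over A tends to +∞, then there is a set B ⊆ A such that the subseries of a over B tends to +∞ and the subseries of a over A \ B tends to +∞. -/
open Filter

/-!
On a tame set `A` whose subseries tends to `+∞`, the nonpositive terms form an absolutely
convergent subseries (otherwise tameness makes the positive ones do so, bounding the subseries
from above), so the positive terms of `A` alone already sum to `+∞`. Such a divergent
series of nonnegative terms is split greedily: each term goes to the side whose partial sum is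
currently not larger. The larger side never grows, so if one side stayed bounded, the other would
soon exceed that bound and from then on receive nothing, contradicting divergence of the total.
-/

open Topology

section PartialSum

variable {a : ℕ → ℝ} {s t : Set ℕ}

theorem partialSum_union (h : Disjoint s t) (N : ℕ) :
    partialSum a (s ∪ t) N = partialSum a s N + partialSum a t N := by
  simp only [partialSum, Set.indicator_union_of_disjoint h, Finset.sum_add_distrib]

theorem partialSum_nonpos (h : ∀ n ∈ s, a n ≤ 0) (N : ℕ) : partialSum a s N ≤ 0 :=
  Finset.sum_nonpos fun n _ => Set.indicator_nonpos h n

theorem monotone_partialSum (h : ∀ n ∈ s, 0 ≤ a n) : Monotone (partialSum a s) :=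
  monotone_nat_of_le_succ fun N => by
    simpa [partialSum, Finset.sum_range_succ] using Set.indicator_nonneg h N

theorem partialSum_succ_of_notMem {n : ℕ} (h : n ∉ s) :
    partialSum a s (n + 1) = partialSum a s n := by
  simp [partialSum, Finset.sum_range_succ, h]

theorem AbsConvOn.tendsto_partialSum (h : AbsConvOn a s) :
    Tendsto (partialSum a s) atTop (𝓝 (∑' n, s.indicator a n)) := by
  have habs : (fun n => |s.indicator a n|) = s.indicator fun n => |a n| :=
    funext fun n => by by_cases hn : n ∈ s <;> simp [hn]
  exact (Summable.of_abs (habs ▸ h)).hasSum.tendsto_sum_nat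

theorem tendsto_partialSum_of_union_of_tendsto {L : ℝ} (hst : Disjoint s t)
    (h : Tendsto (partialSum a (s ∪ t)) atTop atTop)
    (hs : Tendsto (partialSum a s) atTop (𝓝 L)) :
    Tendsto (partialSum a t) atTop atTop := by
  have heq : partialSum a t = fun N => partialSum a (s ∪ t) N + -partialSum a s N := by
    funext N
    rw [partialSum_union hst]
    ring
  rw [heq]
  exact h.atTop_add hs.neg

end PartialSum

theorem sep_pos_union_sep_nonpos (a : ℕ → ℝ) (A : Set ℕ) :
    {n ∈ A | 0 < a n} ∪ {n ∈ A | a n ≤ 0} = A := by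
  ext n
  by_cases hn : 0 < a n <;> simp [hn, le_of_not_gt]

theorem disjoint_sep_pos_sep_nonpos (a : ℕ → ℝ) (A : Set ℕ) :
    Disjoint {n ∈ A | 0 < a n} {n ∈ A | a n ≤ 0} :=
  Set.disjoint_left.2 fun _ hpos hnonpos => (not_lt.2 hnonpos.2) hpos.2

theorem Tame.absConvOn_nonpos {a : ℕ → ℝ} {A : Set ℕ} (hA : Tame a A)
    (htop : Tendsto (partialSum a A) atTop atTop) : AbsConvOn a {n ∈ A | a n ≤ 0} := by
  refine hA.resolve_left fun hpos => ?_
  rw [← sep_pos_union_sep_nonpos a A] at htop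
  obtain ⟨N, hN⟩ := ((tendsto_partialSum_of_union_of_tendsto (disjoint_sep_pos_sep_nonpos a A)
    htop hpos.tendsto_partialSum).eventually_gt_atTop 0).exists
  exact (partialSum_nonpos (fun n hn => hn.2) N).not_gt hN

theorem tendsto_atTop_of_add_of_stalls_when_larger {u v : ℕ → ℝ} (hv : Monotone v)
    (huv : Tendsto (u + v) atTop atTop) (hstall : ∀ n, v n < u n → u (n + 1) = u n) :
    Tendsto v atTop atTop := by
  refine tendsto_atTop_atTop_of_monotone hv fun K => ?_
  by_contra! hK
  obtain ⟨N₀, hN₀⟩ := (huv.eventually_ge_atTop (2 * K)).exists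
  have hu : K < u N₀ := by
    have := hK N₀
    simp only [Pi.add_apply] at hN₀
    linarith
  have hfrozen : ∀ n ≥ N₀, u n = u N₀ := by
    intro n hn
    induction n, hn using Nat.le_induction with
    | base => rfl
    | succ n _ ih => rw [hstall n (ih ▸ (hK n).trans hu), ih]
  obtain ⟨n, hn, hN⟩ := ((eventually_ge_atTop N₀).and
    (huv.eventually_ge_atTop (u N₀ + K))).exists
  simp only [Pi.add_apply, hfrozen n hn] at hN
  linarith [hK n]

section Greedy

variable (g : ℕ → ℝ)

noncomputable def greedyGap : ℕ → ℝ
  | 0 => 0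
  | n + 1 => if greedyGap n ≤ 0 then greedyGap n + g n else greedyGap n - g n

def greedyHalf : Set ℕ := {n | greedyGap g n ≤ 0}

theorem greedyGap_eq (N : ℕ) :
    greedyGap g N = partialSum g (greedyHalf g) N - partialSum g (greedyHalf g)ᶜ N := by
  induction N with
  | zero => simp [greedyGap, partialSum]
  | succ N ih =>
    by_cases hN : greedyGap g N ≤ 0
    · have hmem : N ∈ greedyHalf g := hN
      rw [greedyGap, if_pos hN, ih]
      simp [partialSum, Finset.sum_range_succ, hmem]
      ring
    · have hmem : N ∉ greedyHalf g := hN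
      rw [greedyGap, if_neg hN, ih]
      simp [partialSum, Finset.sum_range_succ, hmem]
      ring

theorem tendsto_partialSum_greedyHalf {g : ℕ → ℝ} (hg : ∀ n, 0 ≤ g n)
    (h : Tendsto (partialSum g Set.univ) atTop atTop) :
    Tendsto (partialSum g (greedyHalf g)) atTop atTop ∧
      Tendsto (partialSum g (greedyHalf g)ᶜ) atTop atTop := by
  set E := greedyHalf g
  have hsum : partialSum g E + partialSum g Eᶜ = partialSum g Set.univ := by
    funext N
    rw [Pi.add_apply, ← partialSum_union disjoint_compl_right, Set.union_compl_self]
  have hmono : ∀ s : Set ℕ, Monotone (partialSum g s) := fun s =>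
    monotone_partialSum fun n _ => hg n
  constructor
  · refine tendsto_atTop_of_add_of_stalls_when_larger (u := partialSum g Eᶜ) (hmono E)
      (by rwa [add_comm, hsum]) fun n hn => partialSum_succ_of_notMem fun hc => ?_
    exact hc (show greedyGap g n ≤ 0 by linarith [greedyGap_eq g n])
  · refine tendsto_atTop_of_add_of_stalls_when_larger (hmono Eᶜ) (hsum ▸ h)
      fun n hn => partialSum_succ_of_notMem fun hmem => ?_
    exact not_le.2 (by linarith [greedyGap_eq g n]) (show greedyGap g n ≤ 0 from hmem)

end Greedy

theorem exists_subset_tendsto_partialSum_atTop_of_nonneg {a : ℕ → ℝ} {P : Set ℕ}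
    (ha : ∀ n ∈ P, 0 ≤ a n) (h : Tendsto (partialSum a P) atTop atTop) :
    ∃ E ⊆ P, Tendsto (partialSum a E) atTop atTop ∧
      Tendsto (partialSum a (P \ E)) atTop atTop := by
  set g := P.indicator a
  have hrestrict : ∀ s : Set ℕ, partialSum g s = partialSum a (s ∩ P) := fun s => by
    funext N
    simp only [partialSum, g, Set.indicator_indicator]
  obtain ⟨hE, hEc⟩ := tendsto_partialSum_greedyHalf (Set.indicator_nonneg ha)
    (by rwa [hrestrict, Set.univ_inter])
  refine ⟨greedyHalf g ∩ P, Set.inter_subset_right, by rwa [← hrestrict], ?_⟩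
  rwa [Set.sdiff_inter_self_eq_sdiff, Set.sdiff_eq_compl_inter, ← hrestrict]

theorem balance_one_general (a : ℕ → ℝ) (A : Set ℕ) (hA : Tame a A)
    (htop : Tendsto (partialSum a A) atTop atTop) :
    ∃ B ⊆ A, Tendsto (partialSum a B) atTop atTop ∧
      Tendsto (partialSum a (A \ B)) atTop atTop := by
  set P := {n ∈ A | 0 < a n}
  set Q := {n ∈ A | a n ≤ 0}
  have hPQ : Disjoint P Q := disjoint_sep_pos_sep_nonpos a A
  have hA_eq : A = P ∪ Q := (sep_pos_union_sep_nonpos a A).symm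
  have hQ := (hA.absConvOn_nonpos htop).tendsto_partialSum
  have hP : Tendsto (partialSum a P) atTop atTop :=
    tendsto_partialSum_of_union_of_tendsto hPQ.symm (by rwa [Set.union_comm, ← hA_eq]) hQ
  obtain ⟨E, hEP, hE, hPE⟩ :=
    exists_subset_tendsto_partialSum_atTop_of_nonneg (fun n hn => hn.2.le) hP
  refine ⟨E, fun n hn => (hEP hn).1, hE, ?_⟩
  have hdiff : A \ E = (P \ E) ∪ Q := by
    rw [hA_eq, Set.union_sdiff_distrib, (hPQ.symm.mono_right hEP).sdiff_eq_left]
  rw [hdiff, funext (partialSum_union (hPQ.mono_left Set.sdiff_subset))]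
  exact hPE.atTop_add hQ

/-- Lemma 8 (balance 1): if `A` is tame and its subseries tends to `+∞`, then `A` splits
into `B` and `A \ B` whose subseries both tend to `+∞`. -/
theorem balance_one (a : ℕ → ℝ) (hcc : CondConv a) (A : Set ℕ) (hA : Tame a A)
    (htop : Tendsto (partialSum a A) atTop atTop) :
    ∃ B ⊆ A, Tendsto (partialSum a B) atTop atTop ∧
      Tendsto (partialSum a (A \ B)) atTop atTop :=
  balance_one_general a A hA htop
end
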